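/- arXiv:1312.5395 — 2 statements merged into one kernel-verified Lean document; each statement's English description precedes it below -/
import Mathlib

section
/- Let (M, φ, ξ, η, g) be an almost contact metric manifold satisfying condition C₁: (∇_X φ)Y + (∇_{φX} φ)(φY) = 2g(X,Y)ξ - η(Y)X - η(X)η(Y)ξ - η(Y)hX for all X, Y. Then (∇_X η)(Y) + (∇_{φX} η)(φY) + 2g(φX, Y) = 0 for all X, Y. -/
/-- Abstract model of an almost contact manifold: `C` is the ring of smooth
functions, `V` the `C`-module of vector fields, with Lie bracket `bracket`,
the derivation action `act X f = X f`, and the almost contact structure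
`(phi, xi, eta)`. -/
structure AlmostContactStr (C V : Type*) [CommRing C] [Algebra ℝ C]
    [AddCommGroup V] [Module C V] where
  bracket : V → V → V
  act : V → C → C
  phi : V →ₗ[C] V
  xi : V
  eta : V →ₗ[C] C
  bracket_antisymm : ∀ X Y, bracket X Y = - bracket Y X
  bracket_add_left : ∀ X Y Z, bracket (X + Y) Z = bracket X Z + bracket Y Z
  bracket_smul_right : ∀ (c : C) (X Y : V),
    bracket X (c • Y) = c • bracket X Y + act X c • Y
  act_add_left : ∀ X Y c, act (X + Y) c = act X c + act Y c
  act_smul_left : ∀ (a : C) (X : V) (c : C), act (a • X) c = a * act X c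
  act_add : ∀ X a b, act X (a + b) = act X a + act X b
  act_mul : ∀ X a b, act X (a * b) = act X a * b + a * act X b
  phi_phi : ∀ X, phi (phi X) = - X + eta X • xi
  phi_xi : phi xi = 0
  eta_phi : ∀ X, eta (phi X) = 0
  eta_xi : eta xi = 1

/-- An almost contact metric structure together with its Levi-Civita
connection `nabla` (torsion-free and metric). -/
structure ACMetricStr (C V : Type*) [CommRing C] [Algebra ℝ C]
    [AddCommGroup V] [Module C V] extends AlmostContactStr C V where
  g : V →ₗ[C] V →ₗ[C] C
  g_symm : ∀ X Y, g X Y = g Y X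
  g_phi : ∀ X Y, g (phi X) (phi Y) = g X Y - eta X * eta Y
  eta_eq : ∀ X, eta X = g xi X
  nabla : V → V → V
  nabla_add_left : ∀ X Y Z, nabla (X + Y) Z = nabla X Z + nabla Y Z
  nabla_smul_left : ∀ (c : C) (X Y : V), nabla (c • X) Y = c • nabla X Y
  nabla_add_right : ∀ X Y Z, nabla X (Y + Z) = nabla X Y + nabla X Z
  nabla_leibniz : ∀ (c : C) (X Y : V),
    nabla X (c • Y) = c • nabla X Y + act X c • Y
  torsion_free : ∀ X Y, nabla X Y - nabla Y X = bracket X Y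
  metric_compat : ∀ X Y Z, act X (g Y Z) = g (nabla X Y) Z + g Y (nabla X Z)

variable {C V : Type*} [CommRing C] [Algebra ℝ C]
  [AddCommGroup V] [Module C V] [Module ℝ V] [IsScalarTower ℝ C V]

namespace ACMetricStr

variable (A : ACMetricStr C V)

/-- `h = (1/2) L_ξ φ`, i.e. `hX = (1/2)([ξ, φX] - φ[ξ, X])`. -/
noncomputable def hT (X : V) : V :=
  (1/2 : ℝ) • (A.bracket A.xi (A.phi X) - A.phi (A.bracket A.xi X))

/-- `(∇_X φ)Y`. -/
noncomputable def covPhi (X Y : V) : V := A.nabla X (A.phi Y) - A.phi (A.nabla X Y)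

/-- `(∇_X η)(Y)`. -/
noncomputable def covEta (X Y : V) : C := A.act X (A.eta Y) - A.eta (A.nabla X Y)

/-- `dη(X,Y) = (1/2)(X(η Y) - Y(η X) - η [X,Y])`. -/
noncomputable def dEta (X Y : V) : C :=
  (1/2 : ℝ) • (A.act X (A.eta Y) - A.act Y (A.eta X) - A.eta (A.bracket X Y))

/-- `N⁽²⁾(X,Y) = (L_{φX} η)(Y) - (L_{φY} η)(X)`. -/
noncomputable def N2 (X Y : V) : C :=
  (A.act (A.phi X) (A.eta Y) - A.eta (A.bracket (A.phi X) Y))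
    - (A.act (A.phi Y) (A.eta X) - A.eta (A.bracket (A.phi Y) X))

/-- Condition `C₁`:
`(∇_X φ)Y + (∇_{φX} φ)(φY) = 2g(X,Y)ξ - η(Y)X - η(X)η(Y)ξ - η(Y)hX`. -/
noncomputable def C1 : Prop := ∀ X Y : V,
  A.covPhi X Y + A.covPhi (A.phi X) (A.phi Y)
    = ((2 : C) * A.g X Y) • A.xi - A.eta Y • X - (A.eta X * A.eta Y) • A.xi
      - A.eta Y • A.hT X

/-- Condition `C₁'`:
`(∇_X φ)Y + (∇_{φX} φ)(φY) = 2g(X,Y)ξ - 2η(Y)X + η(Y)∇_{φX}ξ`. -/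
noncomputable def C1' : Prop := ∀ X Y : V,
  A.covPhi X Y + A.covPhi (A.phi X) (A.phi Y)
    = ((2 : C) * A.g X Y) • A.xi - ((2 : C) * A.eta Y) • X
      + A.eta Y • A.nabla (A.phi X) A.xi

end ACMetricStr

namespace ACMetricStr

variable (A : ACMetricStr C V)

lemma half_cancelC (a : C) (h : a + a = 0) : a = 0 := by
  have h2 : (2 : C) * a = 0 := by rw [two_mul]; exact h
  calc a = ((algebraMap ℝ C (1/2)) * 2) * a := by
        rw [show (2:C) = algebraMap ℝ C 2 from (map_ofNat (algebraMap ℝ C) 2).symm, ← map_mul]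
        norm_num
    _ = (algebraMap ℝ C (1/2)) * ((2:C) * a) := by ring
    _ = 0 := by rw [h2, mul_zero]

lemma act_one' (X : V) : A.act X 1 = 0 := by
  have h := A.act_mul X 1 1
  simp only [mul_one, one_mul] at h
  linear_combination -h

lemma act_zero' (X : V) : A.act X 0 = 0 := by
  have h := A.act_add X 0 0
  simp only [add_zero] at h
  linear_combination -h

lemma g_xi_xi : A.g A.xi A.xi = 1 := by
  rw [← A.eta_eq, A.eta_xi]

lemma g_xi_phi (Z : V) : A.g A.xi (A.phi Z) = 0 := by
  rw [← A.eta_eq]; exact A.eta_phi Z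

lemma g_phi_xi (Z : V) : A.g (A.phi Z) A.xi = 0 := by
  rw [A.g_symm]; exact A.g_xi_phi Z

lemma g_xi_nabla_xi (X : V) : A.g A.xi (A.nabla X A.xi) = 0 := by
  apply half_cancelC
  have h := A.metric_compat X A.xi A.xi
  rw [A.g_xi_xi, A.act_one', A.g_symm (A.nabla X A.xi) A.xi] at h
  linear_combination -h

lemma covEta_xi (X : V) : A.covEta X A.xi = 0 := by
  unfold ACMetricStr.covEta
  rw [A.eta_xi, A.act_one', A.eta_eq, A.g_xi_nabla_xi]
  ring

lemma covEta_add_right (X Y Z : V) :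
    A.covEta X (Y + Z) = A.covEta X Y + A.covEta X Z := by
  unfold ACMetricStr.covEta
  rw [map_add, A.nabla_add_right, map_add, A.act_add]
  ring

lemma covEta_smul_right (X : V) (c : C) (Y : V) :
    A.covEta X (c • Y) = c * A.covEta X Y := by
  unfold ACMetricStr.covEta
  rw [map_smul, smul_eq_mul, A.act_mul, A.nabla_leibniz, map_add, map_smul,
    map_smul, smul_eq_mul, smul_eq_mul]
  ring

lemma covEta_neg_right (X Y : V) : A.covEta X (-Y) = - A.covEta X Y := by
  have h := A.covEta_smul_right X (-1) Y
  rw [neg_one_smul] at h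
  rw [h]; ring

lemma covEta_phi_phi (X Y : V) :
    A.covEta X (A.phi (A.phi Y)) = - A.covEta X Y := by
  rw [A.phi_phi Y, A.covEta_add_right, A.covEta_neg_right, A.covEta_smul_right,
    A.covEta_xi]
  ring

lemma phi_cube (Y : V) : A.phi (A.phi (A.phi Y)) = - A.phi Y := by
  rw [A.phi_phi Y, map_add, map_neg, map_smul, A.phi_xi, smul_zero, add_zero]

lemma g_xi_covPhi (X Y : V) :
    A.g A.xi (A.covPhi X Y) = - A.covEta X (A.phi Y) := by
  unfold ACMetricStr.covPhi ACMetricStr.covEta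
  rw [map_sub, A.g_xi_phi, A.eta_phi, A.act_zero', A.eta_eq]
  ring

lemma g_phi_right (X Y : V) : A.g X (A.phi Y) = - A.g (A.phi X) Y := by
  have h1 := A.g_phi X (A.phi Y)
  rw [A.eta_phi, mul_zero, sub_zero, A.phi_phi Y, map_add, map_neg, map_smul,
    smul_eq_mul, A.g_phi_xi, mul_zero, add_zero] at h1
  linear_combination -h1

end ACMetricStr

/-- Condition `C₁` implies `(∇_X η)(Y) + (∇_{φX} η)(φY) + 2g(φX, Y) = 0`. -/
theorem C2_of_C1 (A : ACMetricStr C V) (hC1 : A.C1) :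
    ∀ X Y : V,
      A.covEta X Y + A.covEta (A.phi X) (A.phi Y)
        + (2 : C) * A.g (A.phi X) Y = 0 := by
  intro X Y
  have key := congrArg (A.g A.xi) (hC1 X (A.phi Y))
  rw [map_add, A.g_xi_covPhi, A.g_xi_covPhi, A.covEta_phi_phi, A.phi_cube,
    A.covEta_neg_right, map_sub, map_sub, map_sub, map_smul, map_smul,
    map_smul, map_smul, A.eta_phi, smul_eq_mul, smul_eq_mul, smul_eq_mul,
    smul_eq_mul, A.g_xi_xi, A.g_phi_right] at key
  linear_combination key
end

section
/- On an almost contact metric manifold, condition C₁ ((∇_X φ)Y + (∇_{φX} φ)(φY) = 2g(X,Y)ξ - η(Y)X - η(X)η(Y)ξ - η(Y)hX for all X,Y) holds if and only if condition C₁' ((∇_X φ)Y + (∇_{φX} φ)(φY) = 2g(X,Y)ξ - 2η(Y)X + η(Y)∇_{φX}ξ for all X,Y) holds. -/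
variable {C V : Type*} [CommRing C] [Algebra ℝ C]
  [AddCommGroup V] [Module C V] [Module ℝ V] [IsScalarTower ℝ C V]

namespace ACMetricStr

variable (A : ACMetricStr C V)

lemma nabla_zero_right' (X : V) : A.nabla X 0 = 0 := by
  have h := A.nabla_leibniz 0 X 0
  simpa [A.act_zero'] using h

lemma nabla_zero_left' (Y : V) : A.nabla 0 Y = 0 := by
  have h := A.nabla_smul_left 0 0 Y
  simpa using h

lemma bracket_zero_right' (X : V) : A.bracket X 0 = 0 := by
  have h := A.bracket_smul_right 0 X 0
  simpa [A.act_zero'] using h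

lemma half_double' {v w : V} (hd : v + v = w + w) : v = w := by
  have h2 : (2 : ℝ) • v = (2 : ℝ) • w := by rw [two_smul, two_smul]; exact hd
  calc v = (1/2 : ℝ) • ((2 : ℝ) • v) := by rw [smul_smul]; norm_num
    _ = (1/2 : ℝ) • ((2 : ℝ) • w) := by rw [h2]
    _ = w := by rw [smul_smul]; norm_num

lemma bracket_xi_xi' : A.bracket A.xi A.xi = 0 := by
  have h := A.bracket_antisymm A.xi A.xi
  apply half_double'
  rw [add_zero]
  nth_rewrite 1 [h]
  exact neg_add_cancel _

lemma hT_xi' : A.hT A.xi = 0 := by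
  simp [hT, A.phi_xi, A.bracket_zero_right', A.bracket_xi_xi']

lemma covPhi_zero_right' (X : V) : A.covPhi X 0 = 0 := by
  simp [covPhi, A.nabla_zero_right']

lemma covPhi_zero_left' (Y : V) : A.covPhi 0 Y = 0 := by
  simp [covPhi, A.nabla_zero_left']

lemma covPhi_xi_right' (X : V) :
    A.covPhi X A.xi = -A.phi (A.nabla X A.xi) := by
  rw [covPhi, A.phi_xi, A.nabla_zero_right', zero_sub]

lemma g_xi_right' (X : V) : A.g X A.xi = A.eta X := by
  rw [A.g_symm, ← A.eta_eq]

/-- `2 hX = (∇_ξ φ)X + φ∇_Xξ - ∇_{φX}ξ`, in doubled form. -/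
lemma hT_double' (X : V) :
    A.hT X + A.hT X
      = A.covPhi A.xi X + A.phi (A.nabla X A.xi) - A.nabla (A.phi X) A.xi := by
  have hb1 : A.bracket A.xi (A.phi X)
      = A.nabla A.xi (A.phi X) - A.nabla (A.phi X) A.xi :=
    (A.torsion_free _ _).symm
  have hb2 : A.bracket A.xi X = A.nabla A.xi X - A.nabla X A.xi :=
    (A.torsion_free _ _).symm
  rw [hT, hb1, hb2, map_sub, covPhi]
  rw [← two_smul ℝ, smul_smul]
  norm_num
  abel

/-- Under `C₁`, one has `∇_{φX}ξ = X - η(X)ξ - hX`. -/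
lemma key_C1 (h : A.C1) (X : V) :
    A.nabla (A.phi X) A.xi = X - A.eta X • A.xi - A.hT X := by
  have hcov : A.covPhi A.xi X = 0 := by
    have e := h A.xi X
    rw [A.phi_xi, A.covPhi_zero_left', A.hT_xi', A.eta_xi, ← A.eta_eq] at e
    rw [add_zero] at e
    rw [e]
    module
  have e := h X A.xi
  rw [A.phi_xi, A.covPhi_zero_right', A.covPhi_xi_right', A.g_xi_right',
    A.eta_xi] at e
  have e3 := A.hT_double' X
  rw [hcov, zero_add] at e3
  linear_combination (norm := module) e3 - e

/-- Under `C₁'`, one has `∇_{φX}ξ = X - η(X)ξ - hX`. -/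
lemma key_C1' (h : A.C1') (X : V) :
    A.nabla (A.phi X) A.xi = X - A.eta X • A.xi - A.hT X := by
  have hcov : A.covPhi A.xi X = 0 := by
    have e := h A.xi X
    rw [A.phi_xi, A.covPhi_zero_left', A.nabla_zero_left', ← A.eta_eq] at e
    rw [add_zero, smul_zero, add_zero] at e
    rw [e]
    module
  have e := h X A.xi
  rw [A.phi_xi, A.covPhi_zero_right', A.covPhi_xi_right', A.g_xi_right',
    A.eta_xi] at e
  have e3 := A.hT_double' X
  rw [hcov, zero_add] at e3
  apply half_double'
  linear_combination (norm := module) e3 - e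

end ACMetricStr

/-- Conditions `C₁` and `C₁'` are equivalent. -/
theorem C1_iff_C1' (A : ACMetricStr C V) : A.C1 ↔ A.C1' := by
  constructor
  · intro h X Y
    rw [h X Y, A.key_C1 h X]
    module
  · intro h X Y
    rw [h X Y, A.key_C1' h X]
    module
end
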